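/- Let ε, γ ∈ ℝ with |ε| < 1 and γ > |ε|/(2·√(1 − ε²)). Then the origin is a global attractor for the periodically driven cubic oscillator with friction: every twice differentiable x : ℝ → ℝ satisfying ẍ(t) + (1 + ε cos t)·x(t)³ + γ·ẋ(t) = 0 for all t ∈ ℝ satisfies x(t) → 0 and ẋ(t) → 0 as t → +∞. -/

import Mathlib

/-!
Write `a t = 1 + ε cos t`. Dividing the kinetic term by `a` makes the energy
`E = ẋ² / (2a) + x⁴ / 4` satisfy `Ė = -(ẋ² / a) (γ - ε sin t / (2a))`, and since
`(1 + ε cos t)² - (1 - ε²) sin² t = (cos t + ε)²` the bracket is at least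
`δ = γ - |ε| / (2√(1 - ε²)) > 0`. So `E` decreases to a limit `L`. If `L > 0`, then for small
`η > 0` the perturbed energy `E + η x³ ẋ` stays nonnegative while its derivative is at most
`-c (ẋ² + x⁶)`, which is bounded away from `0` as long as `E ≥ L`; so it would tend to `-∞`.
Hence `E → 0`, and with it `x` and `ẋ`.
-/

open Filter Topology Set Real

theorem tendsto_zero_of_abs_pow_le {α : Type*} {l : Filter α} {f g : α → ℝ} {n : ℕ}
    (hn : n ≠ 0) (hg : Tendsto g l (𝓝 0)) (hfg : ∀ t, |f t| ^ n ≤ g t) :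
    Tendsto f l (𝓝 0) := by
  have hpow : Tendsto (fun t => |f t| ^ n) l (𝓝 0) :=
    squeeze_zero (fun t => by positivity) hfg hg
  have hroot := ((Real.continuousAt_rpow_const 0 (n⁻¹ : ℝ) (.inr (by positivity))).tendsto.comp
    hpow)
  rw [Real.zero_rpow (by positivity)] at hroot
  refine tendsto_zero_iff_abs_tendsto_zero f |>.mpr ?_
  simpa only [Function.comp_def, Real.pow_rpow_inv_natCast (abs_nonneg _) hn] using hroot

theorem tendsto_atBot_of_hasDerivAt_le_neg {f f' : ℝ → ℝ} {μ : ℝ} (hμ : 0 < μ)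
    (hf : ∀ t, HasDerivAt f (f' t) t) (hf' : ∀ t, 0 < t → f' t ≤ -μ) :
    Tendsto f atTop atBot := by
  have hlin : ∀ t, 0 ≤ t → f t ≤ f 0 - μ * t := by
    intro t ht
    have := (convex_Ici (0 : ℝ)).image_sub_le_mul_sub_of_deriv_le
      (fun s _ => (hf s).continuousAt.continuousWithinAt)
      (fun s _ => (hf s).differentiableAt.differentiableWithinAt)
      (fun s hs => by rw [(hf s).deriv]; exact hf' s (by simpa using hs)) 0 self_mem_Ici t ht ht
    linarith
  refine tendsto_atBot_mono' atTop (eventually_atTop.2 ⟨0, hlin⟩) ?_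
  have hμ' : -μ < 0 := by linarith
  simpa only [id, neg_mul, ← sub_eq_add_neg] using
    tendsto_atBot_add_const_left atTop (f 0) (tendsto_id.const_mul_atTop_of_neg hμ')

theorem exists_pos_mul_le_and_mul_le {K M A B : ℝ} (hA : 0 < A) (hB : 0 < B) :
    ∃ η > 0, η * K ≤ A ∧ η * M ≤ B := by
  have hK : Tendsto (fun η : ℝ => η * K) (𝓝[>] 0) (𝓝 0) :=
    ((continuous_mul_const _).tendsto' 0 0 (zero_mul _)).mono_left nhdsWithin_le_nhds
  have hM : Tendsto (fun η : ℝ => η * M) (𝓝[>] 0) (𝓝 0) :=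
    ((continuous_mul_const _).tendsto' 0 0 (zero_mul _)).mono_left nhdsWithin_le_nhds
  obtain ⟨η, ⟨hηK, hηM⟩, hη⟩ :=
    ((hK.eventually_le_const hA).and (hM.eventually_le_const hB)).and self_mem_nhdsWithin |>.exists
  exact ⟨η, hη, hηK, hηM⟩

theorem abs_mul_cos_le (ε t : ℝ) : |ε * cos t| ≤ |ε| := by
  rw [abs_mul]
  exact mul_le_of_le_one_right (abs_nonneg ε) (abs_cos_le_one t)

theorem one_sub_abs_le_one_add_mul_cos (ε t : ℝ) : 1 - |ε| ≤ 1 + ε * cos t := by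
  linarith [neg_abs_le (ε * cos t), abs_mul_cos_le ε t]

theorem one_add_mul_cos_le_one_add_abs (ε t : ℝ) : 1 + ε * cos t ≤ 1 + |ε| := by
  linarith [le_abs_self (ε * cos t), abs_mul_cos_le ε t]

theorem sqrt_one_sub_sq_mul_abs_sin_le {ε : ℝ} (hε : |ε| ≤ 1) (t : ℝ) :
    √(1 - ε ^ 2) * |sin t| ≤ 1 + ε * cos t := by
  have hpos : 0 ≤ 1 + ε * cos t := by linarith [one_sub_abs_le_one_add_mul_cos ε t]
  have hsq : (1 - ε ^ 2) * sin t ^ 2 ≤ (1 + ε * cos t) ^ 2 := by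
    nlinarith [sin_sq_add_cos_sq t, sq_nonneg (cos t + ε)]
  rw [← sqrt_sq (abs_nonneg (sin t)), ← sqrt_mul' _ (sq_nonneg _), sq_abs]
  exact sqrt_le_iff.2 ⟨hpos, hsq⟩

theorem mul_sin_div_le {ε : ℝ} (hε : |ε| < 1) (t : ℝ) :
    ε * sin t / (1 + ε * cos t) ≤ |ε| / √(1 - ε ^ 2) := by
  have hs : 0 < √(1 - ε ^ 2) := sqrt_pos.2 (by nlinarith [sq_abs ε, abs_nonneg ε])
  have ha : 0 < 1 + ε * cos t := by linarith [one_sub_abs_le_one_add_mul_cos ε t]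
  rw [div_le_div_iff₀ ha hs]
  calc ε * sin t * √(1 - ε ^ 2) ≤ |ε| * (√(1 - ε ^ 2) * |sin t|) := by
        rw [mul_left_comm, ← abs_mul]
        nlinarith [le_abs_self (ε * sin t)]
    _ ≤ |ε| * (1 + ε * cos t) :=
        mul_le_mul_of_nonneg_left (sqrt_one_sub_sq_mul_abs_sin_le hε.le t) (abs_nonneg ε)

namespace CubicOscillator

noncomputable def energy (a x v : ℝ) : ℝ := v ^ 2 / (2 * a) + x ^ 4 / 4

section Pointwise

variable {a x v : ℝ}

theorem pow_four_le_energy (ha : 0 < a) : x ^ 4 ≤ 4 * energy a x v := by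
  have : 0 ≤ v ^ 2 / (2 * a) := by positivity
  unfold energy; linarith

theorem energy_nonneg (ha : 0 < a) : 0 ≤ energy a x v := by
  have := pow_four_le_energy (x := x) (v := v) ha
  nlinarith [pow_two_nonneg (x ^ 2)]

theorem sq_le_energy {β : ℝ} (ha : 0 < a) (haβ : a ≤ β) : v ^ 2 ≤ 2 * β * energy a x v := by
  have hv : v ^ 2 ≤ 2 * a * energy a x v := by
    have : 0 ≤ x ^ 4 / 4 := by positivity
    unfold energy
    rw [mul_add, mul_div_cancel₀ _ (by positivity)]
    nlinarith
  nlinarith [energy_nonneg (x := x) (v := v) ha]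

theorem energy_le_energy_of_le {α : ℝ} (hα : 0 < α) (ha : α ≤ a) : energy a x v ≤ energy α x v := by
  unfold energy
  gcongr

theorem min_le_sq_add_pow_six {α L X : ℝ} (hα : 0 < α) (hX : 0 < X) (hxX : x ^ 2 ≤ X)
    (hL₀ : 0 ≤ L) (hL : L ≤ energy α x v) : min (α * L) (4 * L ^ 2 / X) ≤ v ^ 2 + x ^ 6 := by
  by_cases hx : 2 * L ≤ x ^ 4
  · have : 4 * L ^ 2 / X ≤ x ^ 6 := by
      rw [div_le_iff₀ hX]
      calc 4 * L ^ 2 = (2 * L) ^ 2 := by ring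
        _ ≤ (x ^ 4) ^ 2 := pow_le_pow_left₀ (by linarith) hx 2
        _ = x ^ 2 * x ^ 6 := by ring
        _ ≤ X * x ^ 6 := mul_le_mul_of_nonneg_right hxX (by positivity)
        _ = x ^ 6 * X := mul_comm _ _
    exact (min_le_right _ _).trans (by linarith [pow_two_nonneg v])
  · have : α * L ≤ v ^ 2 := by
      unfold energy at hL
      have : v ^ 2 / (2 * α) * (2 * α) = v ^ 2 := div_mul_cancel₀ _ (by positivity)
      nlinarith
    exact (min_le_left _ _).trans (by linarith [pow_two_nonneg (x ^ 3)])

theorem neg_sq_div_mul_le {β δ d : ℝ} (ha : 0 < a) (haβ : a ≤ β) (hδ : 0 ≤ δ) (hδd : δ ≤ d) :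
    -(v ^ 2 / a) * d ≤ -(δ / β) * v ^ 2 := by
  have hva : v ^ 2 / β ≤ v ^ 2 / a := div_le_div_of_nonneg_left (sq_nonneg v) ha haβ
  have := mul_le_mul hva hδd hδ (by positivity)
  calc -(v ^ 2 / a) * d ≤ -(v ^ 2 / β * δ) := by linarith
    _ = -(δ / β) * v ^ 2 := by ring

theorem cross_term_le {α γ X : ℝ} (hα : 0 < α) (ha : α ≤ a) (hxX : x ^ 2 ≤ X) :
    3 * x ^ 2 * v * v + x ^ 3 * (-(a * x ^ 3) - γ * v)
      ≤ (3 * X + γ ^ 2 / (2 * α)) * v ^ 2 - α / 2 * x ^ 6 := by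
  have hx6 : α * x ^ 6 ≤ a * x ^ 6 := mul_le_mul_of_nonneg_right ha (by positivity)
  have hxv : 3 * x ^ 2 * v * v ≤ 3 * X * v ^ 2 := by nlinarith [sq_nonneg v]
  have hyoung : -(γ * x ^ 3 * v) ≤ α / 2 * x ^ 6 + γ ^ 2 / (2 * α) * v ^ 2 := by
    have : γ ^ 2 / (2 * α) * (2 * α) = γ ^ 2 := div_mul_cancel₀ _ (by positivity)
    nlinarith [sq_nonneg (α * x ^ 3 + γ * v)]
  nlinarith

theorem perturbed_energy_nonneg {β η X : ℝ} (ha : 0 < a) (haβ : a ≤ β) (hxX : x ^ 2 ≤ X)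
    (hη : 0 ≤ η) (hηX : η * (2 * X + β) ≤ 1) : 0 ≤ energy a x v + η * (x ^ 3 * v) := by
  have hW := energy_nonneg (x := x) (v := v) ha
  have hx6 : x ^ 6 ≤ 4 * X * energy a x v := by
    have := pow_four_le_energy (x := x) (v := v) ha
    nlinarith [mul_le_mul_of_nonneg_right hxX (pow_two_nonneg (x ^ 2))]
  have hv := sq_le_energy (x := x) (v := v) ha haβ
  have hxv : -(x ^ 3 * v) ≤ (2 * X + β) * energy a x v := by
    nlinarith [sq_nonneg (x ^ 3 + v)]
  nlinarith [mul_le_mul_of_nonneg_left hxv hη, mul_le_mul_of_nonneg_right hηX hW]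

theorem perturbed_deriv_le {α β γ δ η X d : ℝ} (hα : 0 < α) (ha : α ≤ a) (haβ : a ≤ β)
    (hδ : 0 ≤ δ) (hδd : δ ≤ d) (hxX : x ^ 2 ≤ X) (hη : 0 ≤ η)
    (hηX : η * (3 * X + γ ^ 2 / (2 * α)) ≤ δ / (2 * β)) :
    -(v ^ 2 / a) * d + η * (3 * x ^ 2 * v * v + x ^ 3 * (-(a * x ^ 3) - γ * v))
      ≤ -(min (δ / (2 * β)) (η * α / 2) * (v ^ 2 + x ^ 6)) := by
  have hE := neg_sq_div_mul_le (v := v) (hα.trans_le ha) haβ hδ hδd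
  have hC := mul_le_mul_of_nonneg_left (cross_term_le (v := v) (γ := γ) hα ha hxX) hη
  have hηv := mul_le_mul_of_nonneg_right hηX (sq_nonneg v)
  have hhalf : δ / β = 2 * (δ / (2 * β)) := by ring
  have hmin_v := mul_le_mul_of_nonneg_right (min_le_left (δ / (2 * β)) (η * α / 2)) (sq_nonneg v)
  have hmin_x := mul_le_mul_of_nonneg_right (min_le_right (δ / (2 * β)) (η * α / 2))
    (by positivity : 0 ≤ x ^ 6)
  nlinarith

end Pointwise

theorem hasDerivAt_energy {a x v : ℝ → ℝ} {a' x' v' t : ℝ} (ha : HasDerivAt a a' t)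
    (hx : HasDerivAt x x' t) (hv : HasDerivAt v v' t) (ha₀ : a t ≠ 0) :
    HasDerivAt (fun s => energy (a s) (x s) (v s))
      (v t * v' / a t - v t ^ 2 * a' / (2 * a t ^ 2) + x t ^ 3 * x') t := by
  have := ((hv.pow 2).div (ha.const_mul 2) (by simpa using ha₀)).add ((hx.pow 4).div_const 4)
  refine this.congr_deriv ?_
  simp only [Pi.pow_apply]
  field_simp
  ring

def IsSolution (a : ℝ → ℝ) (γ : ℝ) (x v : ℝ → ℝ) : Prop :=
  ∀ t, HasDerivAt x (v t) t ∧ HasDerivAt v (-(a t * x t ^ 3) - γ * v t) t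

namespace IsSolution

variable {a a' x v : ℝ → ℝ} {γ : ℝ}

theorem hasDerivAt_energy (hs : IsSolution a γ x v) (ha : ∀ t, HasDerivAt a (a' t) t) {t : ℝ}
    (ha₀ : a t ≠ 0) :
    HasDerivAt (fun s => energy (a s) (x s) (v s)) (-(v t ^ 2 / a t) * (γ + a' t / (2 * a t))) t :=
  (CubicOscillator.hasDerivAt_energy (ha t) (hs t).1 (hs t).2 ha₀).congr_deriv (by
    field_simp
    ring)

theorem hasDerivAt_perturbed_energy (hs : IsSolution a γ x v) (ha : ∀ t, HasDerivAt a (a' t) t)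
    (η : ℝ) {t : ℝ} (ha₀ : a t ≠ 0) :
    HasDerivAt (fun s => energy (a s) (x s) (v s) + η * (x s ^ 3 * v s))
      (-(v t ^ 2 / a t) * (γ + a' t / (2 * a t))
        + η * (3 * x t ^ 2 * v t * v t + x t ^ 3 * (-(a t * x t ^ 3) - γ * v t))) t := by
  have hx3 := ((hs t).1.pow 3).congr_deriv (by push_cast; ring : _ = 3 * x t ^ 2 * v t)
  exact (hs.hasDerivAt_energy ha ha₀).add ((hx3.mul (hs t).2).const_mul η)

theorem antitone_energy (hs : IsSolution a γ x v) (ha : ∀ t, HasDerivAt a (a' t) t)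
    (ha₀ : ∀ t, 0 < a t) (hdamp : ∀ t, 0 ≤ γ + a' t / (2 * a t)) :
    Antitone fun t => energy (a t) (x t) (v t) :=
  antitone_of_hasDerivAt_nonpos (fun t => hs.hasDerivAt_energy ha (ha₀ t).ne')
    fun t => mul_nonpos_of_nonpos_of_nonneg (neg_nonpos.2 (by have := ha₀ t; positivity)) (hdamp t)

variable {α β δ : ℝ}

theorem exists_energy_lt (hs : IsSolution a γ x v) (ha : ∀ t, HasDerivAt a (a' t) t)
    (hα : 0 < α) (haα : ∀ t, α ≤ a t) (haβ : ∀ t, a t ≤ β)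
    (hδ : 0 < δ) (hdamp : ∀ t, δ ≤ γ + a' t / (2 * a t)) {L : ℝ} (hL : 0 < L) :
    ∃ t, energy (a t) (x t) (v t) < L := by
  by_contra! hge
  have ha₀ : ∀ t, 0 < a t := fun t => hα.trans_le (haα t)
  have hβ : 0 < β := (ha₀ 0).trans_le (haβ 0)
  have hanti := hs.antitone_energy ha ha₀ fun t => hδ.le.trans (hdamp t)
  set X := 1 + 4 * energy (a 0) (x 0) (v 0)
  have hX : 0 < X := by have := energy_nonneg (x := x 0) (v := v 0) (ha₀ 0); positivity
  have hxX : ∀ t, 0 ≤ t → x t ^ 2 ≤ X := fun t ht => by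
    have := (pow_four_le_energy (x := x t) (v := v t) (ha₀ t)).trans
      (mul_le_mul_of_nonneg_left (hanti ht) zero_le_four)
    nlinarith [sq_nonneg (x t ^ 2 - 1)]
  obtain ⟨η, hη, hηK, hηX⟩ := exists_pos_mul_le_and_mul_le (K := 3 * X + γ ^ 2 / (2 * α))
    (M := 2 * X + β) (A := δ / (2 * β)) (div_pos hδ (by positivity)) one_pos
  have hμ : 0 < min (δ / (2 * β)) (η * α / 2) * min (α * L) (4 * L ^ 2 / X) := by
    have := div_pos hδ (mul_pos two_pos hβ)
    positivity
  have hG := tendsto_atBot_of_hasDerivAt_le_neg hμ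
    (fun t => hs.hasDerivAt_perturbed_energy ha η (ha₀ t).ne') fun t ht => by
      refine (perturbed_deriv_le hα (haα t) (haβ t) hδ.le (hdamp t) (hxX t ht.le) hη.le
        hηK).trans ?_
      refine neg_le_neg (mul_le_mul_of_nonneg_left ?_ (by positivity))
      exact min_le_sq_add_pow_six hα hX (hxX t ht.le) hL.le
        ((hge t).trans (energy_le_energy_of_le hα (haα t)))
  obtain ⟨t, hneg, ht⟩ :=
    ((hG.eventually (eventually_lt_atBot 0)).and (eventually_ge_atTop 0)).exists
  exact hneg.not_ge (perturbed_energy_nonneg (ha₀ t) (haβ t) (hxX t ht) hη.le hηX)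

theorem tendsto_energy (hs : IsSolution a γ x v) (ha : ∀ t, HasDerivAt a (a' t) t)
    (hα : 0 < α) (haα : ∀ t, α ≤ a t) (haβ : ∀ t, a t ≤ β)
    (hδ : 0 < δ) (hdamp : ∀ t, δ ≤ γ + a' t / (2 * a t)) :
    Tendsto (fun t => energy (a t) (x t) (v t)) atTop (𝓝 0) := by
  have ha₀ : ∀ t, 0 < a t := fun t => hα.trans_le (haα t)
  have hanti := hs.antitone_energy ha ha₀ fun t => hδ.le.trans (hdamp t)
  refine tendsto_order.2 ⟨fun b hb => Eventually.of_forall fun t => hb.trans_le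
    (energy_nonneg (ha₀ t)), fun b hb => ?_⟩
  obtain ⟨t₀, ht₀⟩ := hs.exists_energy_lt ha hα haα haβ hδ hdamp hb
  exact eventually_atTop.2 ⟨t₀, fun t ht => (hanti ht).trans_lt ht₀⟩

theorem tendsto_zero (hs : IsSolution a γ x v) (ha : ∀ t, HasDerivAt a (a' t) t)
    (hα : 0 < α) (haα : ∀ t, α ≤ a t) (haβ : ∀ t, a t ≤ β)
    (hδ : 0 < δ) (hdamp : ∀ t, δ ≤ γ + a' t / (2 * a t)) :
    Tendsto x atTop (𝓝 0) ∧ Tendsto v atTop (𝓝 0) := by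
  have hW := hs.tendsto_energy ha hα haα haβ hδ hdamp
  have ha₀ : ∀ t, 0 < a t := fun t => hα.trans_le (haα t)
  refine ⟨tendsto_zero_of_abs_pow_le four_ne_zero (by simpa using hW.const_mul 4) fun t => ?_,
    tendsto_zero_of_abs_pow_le two_ne_zero (by simpa using hW.const_mul (2 * β)) fun t => ?_⟩
  · rw [Even.pow_abs ⟨2, rfl⟩]
    exact pow_four_le_energy (ha₀ t)
  · rw [sq_abs]
    exact sq_le_energy (ha₀ t) (haβ t)

end IsSolution

end CubicOscillator

/-- If `|ε| < 1` and `γ > |ε|/(2√(1 − ε²))`, the origin is a global attractor for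
the driven cubic oscillator `ẍ + (1 + ε cos t) x³ + γ ẋ = 0`: every solution
satisfies `x(t) → 0` and `ẋ(t) → 0` as `t → +∞`. -/
theorem cubic_oscillator_global_attraction
    (ε γ : ℝ) (hε : |ε| < 1)
    (hγ : γ > |ε| / (2 * Real.sqrt (1 - ε ^ 2)))
    (x : ℝ → ℝ)
    (hx : Differentiable ℝ x) (hx' : Differentiable ℝ (deriv x))
    (hode : ∀ t : ℝ,
      deriv (deriv x) t + (1 + ε * Real.cos t) * (x t) ^ 3 + γ * deriv x t = 0) :
    Tendsto x atTop (nhds 0) ∧ Tendsto (deriv x) atTop (nhds 0) := by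
  have hs : CubicOscillator.IsSolution (fun t => 1 + ε * cos t) γ x (deriv x) := fun t =>
    ⟨(hx t).hasDerivAt, (hx' t).hasDerivAt.congr_deriv (by linarith [hode t])⟩
  have ha : ∀ t, HasDerivAt (fun t => 1 + ε * cos t) (-(ε * sin t)) t := fun t => by
    simpa using ((hasDerivAt_cos t).const_mul ε).const_add 1
  refine hs.tendsto_zero ha (β := 1 + |ε|) (δ := γ - |ε| / (2 * √(1 - ε ^ 2))) (by linarith)
    (one_sub_abs_le_one_add_mul_cos ε) (one_add_mul_cos_le_one_add_abs ε) (by linarith) fun t => ?_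
  have := mul_sin_div_le hε t
  rw [div_mul_eq_div_div_swap, div_mul_eq_div_div_swap, neg_div]
  linarith
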